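/- arXiv:1309.1965 — 10 statements merged into one kernel-verified Lean document; each statement's English description precedes it below -/
import Mathlib

section
/- Let W be a vector space over an infinite field K, and let W₀ and W₁ be subspaces of W such that W = W₀ ⊕ W₁ (internal direct sum: W₀ + W₁ = W and W₀ ∩ W₁ = {0}). Let M ⊆ W₀ with M ≠ W₀ and let F = M + W₁ = {m + w : m ∈ M, w ∈ W₁}. If M is star-like (as a subset of W₀), then F is star-like (as a subset of W). -/
open Cardinal

universe u

/-- The additivity number `A(M,W)`: the least element of
`{|F| : F ⊆ W ∧ ∀ w ∈ W, w + F ⊄ M} ∪ {|W|⁺}`. -/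
noncomputable def addNum {W : Type u} [AddCommGroup W] (M : Set W) : Cardinal.{u} :=
  sInf ({κ | ∃ F : Set W, #F = κ ∧ ∀ w : W, ¬ ((fun f => w + f) '' F ⊆ M)} ∪
    {Order.succ #W})

/-- `V` is a maximal linear subspace contained in `M ∪ {0}`. -/
def IsMaxSubspace (K : Type u) {W : Type u} [Field K] [AddCommGroup W] [Module K W]
    (M : Set W) (V : Submodule K W) : Prop :=
  (V : Set W) ⊆ M ∪ {0} ∧ ∀ V' : Submodule K W, V < V' → ¬ ((V' : Set W) ⊆ M ∪ {0})

/-- The maximal lineability number `mL(M)`: the minimum of the dimensions of the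
maximal linear subspaces of `M ∪ {0}`. -/
noncomputable def mL (K : Type u) {W : Type u} [Field K] [AddCommGroup W] [Module K W]
    (M : Set W) : Cardinal.{u} :=
  sInf {κ | ∃ V : Submodule K W, IsMaxSubspace K M V ∧ Module.rank K V = κ}

/-- The lineability number `L(M)`: the least cardinal `κ` such that `M ∪ {0}` contains
no linear subspace of dimension `κ`. -/
noncomputable def linNum (K : Type u) {W : Type u} [Field K] [AddCommGroup W] [Module K W]
    (M : Set W) : Cardinal.{u} :=
  sInf {κ | ¬ ∃ V : Submodule K W, (V : Set W) ⊆ M ∪ {0} ∧ Module.rank K V = κ}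

/-- The star of `M`: the set of `w` such that `c • w ∈ M` for every nonzero scalar `c`. -/
def starSet (K : Type u) {W : Type u} [Field K] [AddCommGroup W] [Module K W]
    (M : Set W) : Set W :=
  {w | ∀ c : K, c ≠ 0 → c • w ∈ M}

/-- `M` is star-like provided `st(M) = M`. -/
def StarLike (K : Type u) {W : Type u} [Field K] [AddCommGroup W] [Module K W]
    (M : Set W) : Prop :=
  starSet K M = M

open Pointwise

section StarLike

variable {K W : Type u} [Field K] [AddCommGroup W] [Module K W]

theorem starSet_subset (M : Set W) : starSet K M ⊆ M := fun w hw => by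
  simpa using hw 1 one_ne_zero

theorem starLike_iff_smul_mem {M : Set W} :
    StarLike K M ↔ ∀ c : K, c ≠ 0 → ∀ w ∈ M, c • w ∈ M :=
  ⟨fun h c hc w hw => (h.symm ▸ hw : w ∈ starSet K M) c hc,
    fun h => (starSet_subset M).antisymm fun w hw c hc => h c hc w hw⟩

theorem Submodule.starLike (p : Submodule K W) : StarLike K (p : Set W) :=
  starLike_iff_smul_mem.2 fun c _ _ hw => p.smul_mem c hw

theorem StarLike.add {M N : Set W} (hM : StarLike K M) (hN : StarLike K N) :
    StarLike K (M + N) := by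
  refine starLike_iff_smul_mem.2 ?_
  rintro c hc _ ⟨m, hm, n, hn, rfl⟩
  exact ⟨c • m, starLike_iff_smul_mem.1 hM c hc m hm,
    c • n, starLike_iff_smul_mem.1 hN c hc n hn, (smul_add c m n).symm⟩

end StarLike

theorem stmt5_general {K W : Type u} [Field K] [AddCommGroup W] [Module K W]
    (W₁ : Submodule K W) (M : Set W) (hstar : StarLike K M) :
    StarLike K (M + (W₁ : Set W)) :=
  hstar.add W₁.starLike

theorem stmt5 {K W : Type u} [Field K] [Infinite K] [AddCommGroup W] [Module K W]
    (W₀ W₁ : Submodule K W) (hsup : W₀ ⊔ W₁ = ⊤) (hinf : W₀ ⊓ W₁ = ⊥)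
    (M : Set W) (hM : M ⊆ (W₀ : Set W)) (hMne : M ≠ (W₀ : Set W))
    (hstar : StarLike K M) :
    StarLike K (M + (W₁ : Set W)) :=
  stmt5_general W₁ M hstar
end

section
/- Let W be a vector space over an infinite field K, and let W₀ and W₁ be subspaces of W such that W = W₀ ⊕ W₁ (internal direct sum: W₀ + W₁ = W and W₀ ∩ W₁ = {0}). Let M ⊆ W₀ with M ≠ W₀ and let F = M + W₁ = {m + w : m ∈ M, w ∈ W₁}. Then A(F,W) = A(M,W₀), where A(M,W₀) is the additivity of M computed inside the vector space W₀. -/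
open Cardinal

universe u

/-!
The projection `π : W → W₀` along `W₁` is a surjective additive map with `M + W₁ = π⁻¹(M)`, so
it suffices that additivity is invariant under pulling back along surjective homomorphisms.
A family with no translate inside `π⁻¹(M)` is mapped by `π` to one with no translate inside `M`,
and a section of `π` lifts such families back injectively. Since `M ≠ W₀`, both sets are proper,
so the whole space is such a family and the cap `|W|⁺` in the definition never matters.
-/

open Pointwise

section AdditivityNumber

variable {W V : Type u} [AddCommGroup W] [AddCommGroup V]

def NoTranslateSubset (F M : Set W) : Prop :=
  ∀ w : W, ¬ ((fun f => w + f) '' F ⊆ M)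

theorem noTranslateSubset_univ {M : Set W} (hM : M ≠ Set.univ) :
    NoTranslateSubset Set.univ M := fun w h =>
  hM <| Set.univ_subset_iff.1 <|
    (Set.image_univ_of_surjective (add_left_surjective w)).symm.subset.trans h

theorem noTranslateSubset_preimage_iff (π : W →+ V) (hπ : Function.Surjective π)
    (F : Set W) (M : Set V) :
    NoTranslateSubset F (π ⁻¹' M) ↔ NoTranslateSubset (π '' F) M := by
  simp only [NoTranslateSubset, hπ.forall, Set.image_subset_iff, Set.preimage_preimage,
    Set.image_image, ← map_add]

theorem addNum_le_mk {F M : Set W} (hF : NoTranslateSubset F M) : addNum M ≤ #F :=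
  csInf_le' (Or.inl ⟨F, rfl, hF⟩)

theorem addNum_eq_sInf_of_ne_univ {M : Set W} (hM : M ≠ Set.univ) :
    addNum M = sInf {κ | ∃ F : Set W, #F = κ ∧ NoTranslateSubset F M} := by
  unfold addNum
  have huniv : #(Set.univ : Set W) ∈ {κ | ∃ F : Set W, #F = κ ∧ NoTranslateSubset F M} :=
    ⟨_, rfl, noTranslateSubset_univ hM⟩
  refine le_antisymm (csInf_le_csInf (OrderBot.bddBelow _) ⟨_, huniv⟩ Set.subset_union_left) ?_
  refine le_csInf ⟨_, Or.inr rfl⟩ ?_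
  rintro κ (hκ | rfl)
  · exact csInf_le' hκ
  · calc _ ≤ #(Set.univ : Set W) := csInf_le' huniv
      _ = #W := mk_univ
      _ ≤ Order.succ #W := Order.le_succ _

theorem addNum_preimage_of_surjective (π : W →+ V) (hπ : Function.Surjective π) {M : Set V}
    (hM : M ≠ Set.univ) : addNum (π ⁻¹' M) = addNum M := by
  have hM' : π ⁻¹' M ≠ Set.univ := by
    rwa [Ne, ← Set.preimage_univ, Set.preimage_eq_preimage hπ]
  obtain ⟨σ, hσ⟩ := hπ.hasRightInverse
  apply le_antisymm
  · rw [addNum_eq_sInf_of_ne_univ hM]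
    refine le_csInf ⟨_, _, rfl, noTranslateSubset_univ hM⟩ ?_
    rintro _ ⟨F, rfl, hF⟩
    rw [← mk_image_eq hσ.injective]
    refine addNum_le_mk ((noTranslateSubset_preimage_iff π hπ _ M).2 ?_)
    rwa [hσ.image_image]
  · rw [addNum_eq_sInf_of_ne_univ hM']
    refine le_csInf ⟨_, _, rfl, noTranslateSubset_univ hM'⟩ ?_
    rintro _ ⟨F, rfl, hF⟩
    exact (addNum_le_mk ((noTranslateSubset_preimage_iff π hπ F M).1 hF)).trans mk_image_le

end AdditivityNumber

theorem Submodule.add_eq_preimage_projectionOnto {R E : Type*} [Ring R] [AddCommGroup E]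
    [Module R E] {W₀ W₁ : Submodule R E} (h : IsCompl W₀ W₁) {M : Set E} (hM : M ⊆ W₀) :
    M + (W₁ : Set E) = W₀.projectionOnto W₁ h ⁻¹' (Subtype.val ⁻¹' M) := by
  ext x
  constructor
  · rintro ⟨m, hm, v, hv, rfl⟩
    rw [Set.mem_preimage, map_add, projectionOnto_apply_of_mem_left h (hM hm),
      (projectionOnto_apply_eq_zero_iff h).2 hv, add_zero]
    exact hm
  · intro hx
    exact ⟨_, hx, _, sub_projection_mem h x, add_sub_cancel _ x⟩

theorem stmt6_general {K W : Type u} [Field K] [AddCommGroup W] [Module K W]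
    (W₀ W₁ : Submodule K W) (hsup : W₀ ⊔ W₁ = ⊤) (hinf : W₀ ⊓ W₁ = ⊥)
    (M : Set W) (hM : M ⊆ (W₀ : Set W)) (hMne : M ≠ (W₀ : Set W)) :
    addNum (M + (W₁ : Set W)) = addNum (Subtype.val ⁻¹' M : Set W₀) := by
  have hcompl : IsCompl W₀ W₁ := ⟨disjoint_iff.2 hinf, codisjoint_iff.2 hsup⟩
  have hM₀ : (Subtype.val ⁻¹' M : Set W₀) ≠ Set.univ := fun h =>
    hMne (hM.antisymm fun x hx => Set.eq_univ_iff_forall.1 h ⟨x, hx⟩)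
  rw [Submodule.add_eq_preimage_projectionOnto hcompl hM]
  exact addNum_preimage_of_surjective (W₀.projectionOnto W₁ hcompl).toAddMonoidHom
    (Submodule.projectionOnto_surjective hcompl) hM₀

theorem stmt6 {K W : Type u} [Field K] [Infinite K] [AddCommGroup W] [Module K W]
    (W₀ W₁ : Submodule K W) (hsup : W₀ ⊔ W₁ = ⊤) (hinf : W₀ ⊓ W₁ = ⊥)
    (M : Set W) (hM : M ⊆ (W₀ : Set W)) (hMne : M ≠ (W₀ : Set W)) :
    addNum (M + (W₁ : Set W)) = addNum (Subtype.val ⁻¹' M : Set W₀) :=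
  stmt6_general W₀ W₁ hsup hinf M hM hMne
end

section
/- Let W be a vector space over an infinite field K, and let W₀ and W₁ be subspaces of W such that W = W₀ ⊕ W₁ (internal direct sum: W₀ + W₁ = W and W₀ ∩ W₁ = {0}). Let M ⊆ W₀ with M ≠ W₀, 0 ∈ M, and let F = M + W₁ = {m + w : m ∈ M, w ∈ W₁}. If dim(W₁) < L(M), then L(F) = L(M) + dim(W₁), where the addition is cardinal addition and L(M) is computed inside W₀. -/
open Cardinal

universe u

/-!
Projecting along `W₁` splits a subspace `U ⊆ F ∪ {0}` into its image in `W₀`, a subspace of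
`M ∪ {0}`, and its intersection with `W₁`; conversely a subspace of `M ∪ {0}` plus any subspace
of `W₁` is a subspace of `F ∪ {0}` of the summed dimension. Hence the dimensions realised in
`F ∪ {0}` are exactly the sums `κ + δ` with `κ < L(M)` and `δ ≤ dim W₁`, and because
`dim W₁ < L(M)` these are exactly the cardinals below `L(M) + dim W₁`.
-/

open Pointwise

theorem Submodule.exists_le_rank_eq {K V : Type u} [Field K] [AddCommGroup V] [Module K V]
    (U : Submodule K V) {κ : Cardinal.{u}} (h : κ ≤ Module.rank K U) :
    ∃ U' ≤ U, Module.rank K U' = κ := by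
  obtain ⟨s, hs, hli⟩ := le_rank_iff_exists_linearIndependent.mp h
  have hli' : LinearIndependent K (fun x : s => ((x : U) : V)) :=
    hli.map' U.subtype U.ker_subtype
  refine ⟨Submodule.span K (Set.range fun x : s => ((x : U) : V)), ?_, ?_⟩
  · rw [Submodule.span_le]
    rintro _ ⟨x, rfl⟩
    exact (x : U).2
  · rw [rank_span hli', Cardinal.mk_range_eq _ hli'.injective, hs]

theorem Submodule.rank_map_add_rank_inf_ker {K V V' : Type u} [Field K] [AddCommGroup V]
    [Module K V] [AddCommGroup V'] [Module K V'] (f : V →ₗ[K] V') (U : Submodule K V) :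
    Module.rank K (U.map f) + Module.rank K (U ⊓ LinearMap.ker f : Submodule K V) =
      Module.rank K U := by
  rw [← (f.domRestrict U).rank_range_add_rank_ker, LinearMap.ker_domRestrict,
    ← rank_map_eq U.injective_subtype, Submodule.map_comap_subtype, LinearMap.range_domRestrict]

theorem Cardinal.lt_add_iff_exists_add_eq {L d ν : Cardinal} (hd : d < L) :
    ν < L + d ↔ ∃ κ δ, κ < L ∧ δ ≤ d ∧ κ + δ = ν := by
  rcases lt_or_ge L ℵ₀ with hL | hL
  · lift L to ℕ using hL
    lift d to ℕ using hd.trans natCast_lt_aleph0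
    norm_cast at hd
    constructor
    · intro hν
      lift ν to ℕ using hν.trans (by exact_mod_cast natCast_lt_aleph0)
      norm_cast at hν
      exact ⟨(ν - d : ℕ), (min ν d : ℕ), by norm_cast; omega, by norm_cast; omega,
        by norm_cast; omega⟩
    · rintro ⟨κ, δ, hκ, hδ, rfl⟩
      lift κ to ℕ using hκ.trans natCast_lt_aleph0
      lift δ to ℕ using hδ.trans_lt natCast_lt_aleph0
      norm_cast at hκ hδ ⊢
      omega
  · rw [add_eq_left hL hd.le]
    constructor
    · exact fun hν => ⟨ν, 0, hν, zero_le, add_zero ν⟩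
    · rintro ⟨κ, δ, hκ, hδ, rfl⟩
      exact add_lt_of_lt hL hκ (hδ.trans_lt hd)

section linNum

variable {K W : Type u} [Field K] [AddCommGroup W] [Module K W] {M : Set W} {κ : Cardinal.{u}}

theorem lt_linNum_iff :
    κ < linNum K M ↔ ∃ V : Submodule K W, (V : Set W) ⊆ M ∪ {0} ∧ Module.rank K V = κ := by
  refine ⟨fun h => not_not.mp (notMem_of_lt_csInf h (OrderBot.bddBelow _)), ?_⟩
  rintro ⟨V, hV, rfl⟩
  by_contra! h
  obtain ⟨V', hV'V, hV'⟩ := V.exists_le_rank_eq h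
  have hne : {κ | ¬ ∃ V : Submodule K W, (V : Set W) ⊆ M ∪ {0} ∧ Module.rank K V = κ}.Nonempty :=
    ⟨Order.succ (Module.rank K W), fun ⟨V, _, hV⟩ =>
      (Order.lt_succ _).not_ge (hV ▸ Submodule.rank_le V)⟩
  exact csInf_mem hne ⟨V', (SetLike.coe_mono hV'V).trans hV, hV'⟩

theorem rank_lt_linNum {V : Submodule K W} (hV : (V : Set W) ⊆ M ∪ {0}) :
    Module.rank K V < linNum K M :=
  lt_linNum_iff.mpr ⟨V, hV, rfl⟩

end linNum

section DirectSum

variable {K W : Type u} [Field K] [AddCommGroup W] [Module K W] {W₀ W₁ : Submodule K W}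
  {M : Set W}

theorem exists_submodule_subset_add_rank_eq (hdisj : Disjoint W₀ W₁) (h0 : 0 ∈ M)
    {V : Submodule K W₀} (hV : (V : Set W₀) ⊆ Subtype.val ⁻¹' M ∪ {0}) {δ : Cardinal.{u}}
    (hδ : δ ≤ Module.rank K W₁) :
    ∃ U : Submodule K W, (U : Set W) ⊆ M + W₁ ∪ {0} ∧
      Module.rank K U = Module.rank K V + δ := by
  obtain ⟨V₁, hV₁, rfl⟩ := W₁.exists_le_rank_eq hδ
  have hinf : V.map W₀.subtype ⊓ V₁ = ⊥ :=
    (hdisj.mono (Submodule.map_subtype_le W₀ V) hV₁).eq_bot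
  refine ⟨V.map W₀.subtype ⊔ V₁, ?_, ?_⟩
  · intro x hx
    obtain ⟨_, ⟨y, hy, rfl⟩, z, hz, rfl⟩ := Submodule.mem_sup.mp hx
    have hyM : (y : W) ∈ M := (hV hy).elim id fun hy0 => (hy0 : y = 0) ▸ h0
    exact Or.inl (Set.add_mem_add hyM (hV₁ hz))
  · have := Submodule.rank_sup_add_rank_inf_eq (V.map W₀.subtype) V₁
    rwa [hinf, rank_bot, add_zero, rank_map_eq W₀.injective_subtype] at this

theorem exists_rank_eq_add_of_subset_add (hc : IsCompl W₀ W₁) (hM : M ⊆ W₀)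
    {U : Submodule K W} (hU : (U : Set W) ⊆ M + W₁ ∪ {0}) :
    ∃ V : Submodule K W₀, (V : Set W₀) ⊆ Subtype.val ⁻¹' M ∪ {0} ∧
      ∃ δ ≤ Module.rank K W₁, Module.rank K U = Module.rank K V + δ := by
  set π := W₀.projectionOnto W₁ hc
  have hker : U ⊓ LinearMap.ker π ≤ W₁ := inf_le_right.trans (Submodule.ker_projectionOnto hc).le
  refine ⟨U.map π, ?_, _, Submodule.rank_mono hker,
    (Submodule.rank_map_add_rank_inf_ker π U).symm⟩
  rintro _ ⟨x, hx, rfl⟩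
  rcases hU hx with ⟨m, hm, w, hw, rfl⟩ | rfl
  · left
    simp [π, Submodule.projectionOnto_apply_of_mem_left hc (hM hm),
      Submodule.projectionOnto_apply_of_mem_right hc hw, hm]
  · right
    simp

end DirectSum

theorem stmt8_general {K W : Type u} [Field K] [AddCommGroup W] [Module K W]
    (W₀ W₁ : Submodule K W) (hsup : W₀ ⊔ W₁ = ⊤) (hinf : W₀ ⊓ W₁ = ⊥)
    (M : Set W) (hM : M ⊆ (W₀ : Set W)) (h0 : (0 : W) ∈ M)
    (hdim : Module.rank K W₁ < linNum K (Subtype.val ⁻¹' M : Set W₀)) :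
    linNum K (M + (W₁ : Set W)) =
      linNum K (Subtype.val ⁻¹' M : Set W₀) + Module.rank K W₁ := by
  have hc : IsCompl W₀ W₁ := ⟨disjoint_iff.mpr hinf, codisjoint_iff.mpr hsup⟩
  refine eq_of_forall_lt_iff fun ν => ?_
  rw [lt_linNum_iff, Cardinal.lt_add_iff_exists_add_eq hdim]
  constructor
  · rintro ⟨U, hU, rfl⟩
    obtain ⟨V, hV, δ, hδ, hrank⟩ := exists_rank_eq_add_of_subset_add hc hM hU
    exact ⟨_, δ, rank_lt_linNum hV, hδ, hrank.symm⟩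
  · rintro ⟨κ, δ, hκ, hδ, rfl⟩
    obtain ⟨V, hV, rfl⟩ := lt_linNum_iff.mp hκ
    exact exists_submodule_subset_add_rank_eq hc.disjoint h0 hV hδ

theorem stmt8 {K W : Type u} [Field K] [Infinite K] [AddCommGroup W] [Module K W]
    (W₀ W₁ : Submodule K W) (hsup : W₀ ⊔ W₁ = ⊤) (hinf : W₀ ⊓ W₁ = ⊥)
    (M : Set W) (hM : M ⊆ (W₀ : Set W)) (hMne : M ≠ (W₀ : Set W)) (h0 : (0 : W) ∈ M)
    (hdim : Module.rank K W₁ < linNum K (Subtype.val ⁻¹' M : Set W₀)) :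
    linNum K (M + (W₁ : Set W)) =
      linNum K (Subtype.val ⁻¹' M : Set W₀) + Module.rank K W₁ :=
  stmt8_general W₀ W₁ hsup hinf M hM h0 hdim
end

section
/- Let W be a vector space over an infinite field K, and let W₀ and W₁ be subspaces of W such that W = W₀ ⊕ W₁ (internal direct sum: W₀ + W₁ = W and W₀ ∩ W₁ = {0}). Let M ⊆ W₀ with M ≠ W₀, 0 ∈ M, and let F = M + W₁ = {m + w : m ∈ M, w ∈ W₁}. Then a linear subspace V of W is maximal in F ∪ {0} if and only if V = V₀ + W₁ for some linear subspace V₀ of W₀ that is maximal in M ∪ {0}. -/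
open Cardinal

universe u

open Pointwise

/-! Let `P` be the projection onto `W₀` along `W₁`. Since `0 ∈ M ⊆ W₀`, the set `M + W₁` is the
preimage `P ⁻¹' M`. For any linear map `f` and `0 ∈ M ⊆ range f`, every subspace `V ⊆ f ⁻¹' M`
lies in `comap f (map f V) ⊆ f ⁻¹' M`, and `comap f` is strictly monotone on subspaces of
`range f`; hence the maximal subspaces of `f ⁻¹' M` are the comaps of the maximal subspaces of
`M`. Finally `comap P V₀ = V₀ ⊔ W₁` for `V₀ ≤ W₀`. -/

namespace Submodule

section Projection

variable {R E : Type*} [Ring R] [AddCommGroup E] [Module R E] {p q : Submodule R E}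

theorem preimage_projection_eq_add (hpq : IsCompl p q) {M : Set E} (hM : M ⊆ p) :
    p.projection q hpq ⁻¹' M = M + q := by
  ext x
  constructor
  · intro hx
    exact ⟨_, hx, _, sub_projection_mem hpq x, add_sub_cancel _ x⟩
  · rintro ⟨m, hm, w, hw, rfl⟩
    rwa [Set.mem_preimage, map_add, projection_apply_of_mem_left hpq (hM hm),
      projection_apply_of_mem_right hpq hw, add_zero]

theorem map_projection_of_le (hpq : IsCompl p q) {V : Submodule R E} (hV : V ≤ p) :
    V.map (p.projection q hpq) = V := by
  ext x
  constructor
  · rintro ⟨y, hy, rfl⟩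
    rwa [projection_apply_of_mem_left hpq (hV hy)]
  · intro hx
    exact ⟨x, hx, projection_apply_of_mem_left hpq (hV hx)⟩

theorem comap_projection_of_le (hpq : IsCompl p q) {V : Submodule R E} (hV : V ≤ p) :
    V.comap (p.projection q hpq) = V ⊔ q := by
  conv_lhs => rw [← map_projection_of_le hpq hV]
  rw [comap_map_eq, ker_projection]

end Projection

theorem comap_lt_comap_of_le_range {R M N : Type*} [Semiring R] [AddCommMonoid M] [Module R M]
    [AddCommMonoid N] [Module R N] (f : M →ₗ[R] N) {A B : Submodule R N} (hAB : A < B)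
    (hB : B ≤ LinearMap.range f) : A.comap f < B.comap f := by
  refine (comap_mono hAB.le).lt_of_ne fun h => hAB.ne ?_
  rw [← map_comap_eq_self (hAB.le.trans hB), h, map_comap_eq_self hB]

end Submodule

section

variable {K W W' : Type u} [Field K] [AddCommGroup W] [Module K W] [AddCommGroup W'] [Module K W']

theorem isMaxSubspace_iff_of_zero_mem {M : Set W} (h0 : (0 : W) ∈ M) (V : Submodule K W) :
    IsMaxSubspace K M V ↔
      (V : Set W) ⊆ M ∧ ∀ V' : Submodule K W, V < V' → ¬ (V' : Set W) ⊆ M := by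
  rw [IsMaxSubspace, Set.union_singleton, Set.insert_eq_of_mem h0]

theorem isMaxSubspace_preimage_iff (f : W →ₗ[K] W') {M : Set W'}
    (hM : M ⊆ LinearMap.range f) (h0 : (0 : W') ∈ M) (V : Submodule K W) :
    IsMaxSubspace K (f ⁻¹' M) V ↔
      ∃ V' : Submodule K W', V' ≤ LinearMap.range f ∧ IsMaxSubspace K M V' ∧ V = V'.comap f := by
  have h0' : (0 : W) ∈ f ⁻¹' M := by simpa using h0
  simp only [isMaxSubspace_iff_of_zero_mem h0', isMaxSubspace_iff_of_zero_mem h0]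
  constructor
  · rintro ⟨hV, hVmax⟩
    have hmap : (V.map f : Set W') ⊆ M := Set.image_subset_iff.2 hV
    have hVeq : V = (V.map f).comap f := by
      by_contra hne
      exact hVmax _ ((Submodule.le_comap_map f V).lt_of_ne hne) (Set.preimage_mono hmap)
    refine ⟨V.map f, LinearMap.map_le_range, ⟨hmap, fun U hlt hU => ?_⟩, hVeq⟩
    refine hVmax (U.comap f) ?_ (Set.preimage_mono hU)
    rw [hVeq]
    exact Submodule.comap_lt_comap_of_le_range f hlt fun y hy => hM (hU hy)
  · rintro ⟨V', hV'range, ⟨hV', hV'max⟩, rfl⟩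
    refine ⟨Set.preimage_mono hV', fun U hlt hU => ?_⟩
    have hV'U : V' ≤ U.map f := by
      rw [← Submodule.map_comap_eq_self hV'range]
      exact Submodule.map_mono hlt.le
    refine hV'max (U.map f) (hV'U.lt_of_ne ?_) (Set.image_subset_iff.2 hU)
    rintro rfl
    exact hlt.not_ge (Submodule.le_comap_map f U)

end

theorem stmt9_general {K W : Type u} [Field K] [AddCommGroup W] [Module K W]
    (W₀ W₁ : Submodule K W) (hsup : W₀ ⊔ W₁ = ⊤) (hinf : W₀ ⊓ W₁ = ⊥)
    (M : Set W) (hM : M ⊆ (W₀ : Set W)) (h0 : (0 : W) ∈ M)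
    (V : Submodule K W) :
    IsMaxSubspace K (M + (W₁ : Set W)) V ↔
      ∃ V₀ : Submodule K W, V₀ ≤ W₀ ∧ IsMaxSubspace K M V₀ ∧ V = V₀ ⊔ W₁ := by
  have hpq : IsCompl W₀ W₁ := IsCompl.of_eq hinf hsup
  have hrange : LinearMap.range (W₀.projection W₁ hpq) = W₀ := Submodule.range_projection hpq
  rw [← Submodule.preimage_projection_eq_add hpq hM,
    isMaxSubspace_preimage_iff _ (by rwa [hrange]) h0, hrange]
  refine exists_congr fun V₀ => and_congr_right fun hV₀ => ?_
  rw [Submodule.comap_projection_of_le hpq hV₀]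

theorem stmt9 {K W : Type u} [Field K] [Infinite K] [AddCommGroup W] [Module K W]
    (W₀ W₁ : Submodule K W) (hsup : W₀ ⊔ W₁ = ⊤) (hinf : W₀ ⊓ W₁ = ⊥)
    (M : Set W) (hM : M ⊆ (W₀ : Set W)) (hMne : M ≠ (W₀ : Set W)) (h0 : (0 : W) ∈ M)
    (V : Submodule K W) :
    IsMaxSubspace K (M + (W₁ : Set W)) V ↔
      ∃ V₀ : Submodule K W, V₀ ≤ W₀ ∧ IsMaxSubspace K M V₀ ∧ V = V₀ ⊔ W₁ :=
  stmt9_general W₀ W₁ hsup hinf M hM h0 V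
end

section
/- For every n ≥ 1, there exists a linear subspace V of the real vector space of all functions from ℝⁿ to ℝ such that V is closed in the topology of pointwise convergence, dim(V) = 𝔠, and every element of V is continuous. In other words, the class C(ℝⁿ) of continuous functions is 𝔠-spaceable with respect to the topology of pointwise convergence. -/
/-!
Piecewise-linear interpolation of integer-indexed data, composed with a continuous surjection
`p : X → ℝ` (a coordinate projection of `ℝⁿ`), is an injective linear map `L` from `ℤ → ℝ` into the
continuous functions on `X`. For the product topologies `L` is continuous and has a continuous
left inverse, namely evaluation at points lying over the integers; so its range is a retract of a
Hausdorff space, hence closed, and has the dimension of `ℤ → ℝ`, which is `𝔠` by Erdős–Kaplansky.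
-/

open Cardinal Set Function Filter

noncomputable def intInterp (h : ℤ → ℝ) (t : ℝ) : ℝ :=
  (1 - Int.fract t) * h ⌊t⌋ + Int.fract t * h (⌊t⌋ + 1)

theorem intInterp_intCast (h : ℤ → ℝ) (k : ℤ) : intInterp h k = h k := by
  simp [intInterp]

theorem intInterp_eq_of_mem_Icc (h : ℤ → ℝ) {k : ℤ} {t : ℝ} (ht : t ∈ Icc (k : ℝ) (k + 1)) :
    intInterp h t = (1 - (t - k)) * h k + (t - k) * h (k + 1) := by
  obtain ⟨hkt, htk⟩ := ht
  rcases htk.eq_or_lt with rfl | hlt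
  · rw [← Int.cast_one, ← Int.cast_add, intInterp_intCast]
    push_cast
    ring
  · have hfloor : ⌊t⌋ = k := Int.floor_eq_iff.mpr ⟨hkt, hlt⟩
    simp [intInterp, Int.fract, hfloor]

theorem continuous_intInterp (h : ℤ → ℝ) : Continuous (intInterp h) := by
  refine LocallyFinite.continuous (f := fun k : ℤ => Icc (k : ℝ) (k + 1))
    (locallyFinite_Icc_of_tendsto tendsto_intCast_atTop_atTop ?_) ?_ (fun _ => isClosed_Icc)
    fun k => ?_
  · exact tendsto_atBot_add_const_right _ 1 (tendsto_intCast_atBot_iff.2 tendsto_id)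
  · exact eq_univ_of_forall fun t =>
      mem_iUnion.mpr ⟨⌊t⌋, Int.floor_le t, (Int.lt_floor_add_one t).le⟩
  · exact (by fun_prop : Continuous fun t : ℝ => (1 - (t - k)) * h k + (t - k) * h (k + 1))
      |>.continuousOn.congr fun t ht => intInterp_eq_of_mem_Icc h ht

noncomputable def intInterpₗ : (ℤ → ℝ) →ₗ[ℝ] ℝ → ℝ where
  toFun := intInterp
  map_add' h₁ h₂ := by ext t; simp only [intInterp, Pi.add_apply]; ring
  map_smul' c h := by
    ext t
    simp only [intInterp, Pi.smul_apply, smul_eq_mul, RingHom.id_apply]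
    ring

theorem continuous_intInterpₗ : Continuous (intInterpₗ : (ℤ → ℝ) → ℝ → ℝ) :=
  continuous_pi fun t => by
    simp only [intInterpₗ, LinearMap.coe_mk, AddHom.coe_mk, intInterp]
    fun_prop

theorem rank_int_fun_real : Module.rank ℝ (ℤ → ℝ) = 𝔠 := by
  rw [rank_fun_infinite, mk_arrow, mk_real, mk_int, lift_continuum, lift_aleph0,
    continuum_power_aleph0]

theorem exists_isClosed_submodule_continuous_rank_continuum {X : Type*} [TopologicalSpace X]
    {p : X → ℝ} (hp : Continuous p) (hsurj : Surjective p) :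
    ∃ V : Submodule ℝ (X → ℝ), IsClosed (V : Set (X → ℝ)) ∧ Module.rank ℝ V = 𝔠 ∧
      ∀ f ∈ V, Continuous f := by
  set L := LinearMap.funLeft ℝ ℝ p ∘ₗ intInterpₗ
  have hL : Continuous L :=
    continuous_pi fun x => (continuous_apply (p x)).comp continuous_intInterpₗ
  set R : (X → ℝ) → ℤ → ℝ := fun f k => f (surjInv hsurj k)
  have hR : Continuous R := continuous_pi fun k => continuous_apply _
  have hRL : LeftInverse R L := fun h => funext fun k => by
    simp [R, L, LinearMap.funLeft, surjInv_eq hsurj, intInterpₗ, intInterp_intCast]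
  refine ⟨LinearMap.range L, ?_, ?_, ?_⟩
  · rw [LinearMap.coe_range]
    exact hRL.isClosed_range hR hL
  · simpa [rank_int_fun_real] using lift_rank_range_of_injective L hRL.injective
  · rintro f ⟨h, rfl⟩
    exact (continuous_intInterp h).comp hp

/-- For every `n ≥ 1`, the class `C(ℝⁿ)` of continuous functions is `𝔠`-spaceable with
respect to the topology of pointwise convergence. -/
theorem stmt14 (n : ℕ) (hn : 1 ≤ n) :
    ∃ V : Submodule ℝ ((Fin n → ℝ) → ℝ),
      IsClosed (V : Set ((Fin n → ℝ) → ℝ)) ∧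
      Module.rank ℝ V = Cardinal.continuum ∧
      ∀ f ∈ V, Continuous f :=
  exists_isClosed_submodule_continuous_rank_continuum (continuous_apply ⟨0, hn⟩)
    fun t => ⟨fun _ => t, rfl⟩
end

section
/- For every n ≥ 1, there exists a linear subspace V of the real vector space of all functions from ℝⁿ to ℝ such that V is closed in the topology of pointwise convergence, dim(V) = 2^𝔠, and every nonzero element of V is a Jones function. In other words, the class J(ℝⁿ) of Jones functions is 2^𝔠-spaceable with respect to the topology of pointwise convergence. -/
/-!
Jones's construction. There are only `𝔠` triples `(a, t, F)` with `a, t ∈ ℝ` and `F ⊆ X × ℝ`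
closed with uncountable projection, while each such projection has `𝔠` points. So a transfinite
recursion of length `𝔠` picks pairwise distinct points `x_{a,t,F}` in the projection of `F`,
with `(x_{a,t,F}, y) ∈ F`, and one sets `φ x = a`, `c x = y / t` there. For `g : ℝ → ℝ` with
`g a ≠ 0`, the function `x ↦ c x * g (φ x)` then meets `F` at `x_{a,g a,F}`. These functions form
the range of an injective linear map on `ℝ → ℝ`, hence a space of dimension `𝔠 ^ 𝔠 = 2 ^ 𝔠`, and
the range is cut out by pointwise closed linear conditions.
-/

open Cardinal

def JonesFn {n : ℕ} (f : (Fin n → ℝ) → ℝ) : Prop :=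
  ∀ F : Set ((Fin n → ℝ) × ℝ), IsClosed F → ¬ (Prod.fst '' F).Countable →
    ∃ x : Fin n → ℝ, (x, f x) ∈ F

open Set Function

universe u

theorem Cardinal.exists_injective_forall_mem_of_wellFoundedLT {ι α : Type u} [LinearOrder ι]
    [WellFoundedLT ι] (A : ι → Set α) (hA : ∀ i, #(Iio i) < #(A i)) :
    ∃ x : ι → α, Injective x ∧ ∀ i, x i ∈ A i := by
  have fresh (i : ι) (prev : ∀ j < i, α) : (A i \ range fun j : Iio i ↦ prev j j.2).Nonempty := by
    rw [nonempty_iff_ne_empty, Ne, sdiff_eq_empty]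
    exact fun hsub ↦ (hA i).not_ge ((mk_le_mk_of_subset hsub).trans mk_range_le)
  let x : ι → α := WellFoundedLT.fix fun i prev ↦ (fresh i prev).some
  have hx (i : ι) : x i ∈ A i \ range fun j : Iio i ↦ x j := by
    rw [show x i = _ from WellFoundedLT.fix_eq _ i]
    exact (fresh i fun j _ ↦ x j).some_mem
  exact ⟨x, Injective.of_lt_imp_ne fun i j hij hx_eq ↦ (hx j).2 ⟨⟨i, hij⟩, hx_eq⟩,
    fun i ↦ (hx i).1⟩

theorem Cardinal.exists_injective_forall_mem {ι α : Type u} (A : ι → Set α)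
    (hA : ∀ i, #ι ≤ #(A i)) : ∃ x : ι → α, Injective x ∧ ∀ i, x i ∈ A i := by
  obtain ⟨e⟩ : Nonempty (ι ≃ (#ι).ord.ToType) := Cardinal.eq.1 (by simp)
  obtain ⟨x, hx, hxA⟩ := exists_injective_forall_mem_of_wellFoundedLT (A ∘ e.symm) fun j ↦
    (mk_Iio_lt j (by simp)).trans_le (by simpa using hA (e.symm j))
  exact ⟨x ∘ e, hx.comp e.injective, fun i ↦ by simpa using hxA (e i)⟩

theorem mk_isClosed_le_continuum (X : Type u) [TopologicalSpace X]
    [SecondCountableTopology X] : #{F : Set X // IsClosed F} ≤ 𝔠 := by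
  let B := TopologicalSpace.countableBasis X
  have hinj : Injective fun F : {F : Set X // IsClosed F} ↦ {U : B | (U : Set X) ⊆ F.1ᶜ} := by
    intro F G hFG
    have hB := TopologicalSpace.isBasis_countableBasis X
    have : {s ∈ B | s ⊆ F.1ᶜ} = {s ∈ B | s ⊆ G.1ᶜ} := by
      ext s
      exact and_congr_right fun hs ↦ Set.ext_iff.1 hFG ⟨s, hs⟩
    rw [Subtype.ext_iff, ← compl_inj_iff, hB.open_eq_sUnion' F.2.isOpen_compl,
      hB.open_eq_sUnion' G.2.isOpen_compl, this]
  calc #{F : Set X // IsClosed F} ≤ #(Set B) := mk_le_of_injective hinj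
    _ = 2 ^ #B := mk_set
    _ ≤ 2 ^ ℵ₀ := power_le_power_left two_ne_zero
        (mk_le_aleph0_iff.2 (TopologicalSpace.countable_countableBasis X).to_subtype)
    _ = 𝔠 := two_power_aleph0

theorem IsClosed.continuum_le_mk_of_not_countable {X : Type u} [TopologicalSpace X]
    [PolishSpace X] {C : Set X} (hC : IsClosed C) (h : ¬C.Countable) : 𝔠 ≤ #C := by
  obtain ⟨f, hfC, -, hf⟩ := hC.exists_nat_bool_injection_of_not_countable h
  simpa using lift_mk_le_lift_mk_of_injective (f := codRestrict f C fun a ↦ hfC ⟨a, rfl⟩)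
    (hf.codRestrict _)

theorem IsClosed.isClosed_image_fst_inter_prod {X Y : Type*} [TopologicalSpace X]
    [TopologicalSpace Y] {F : Set (X × Y)} (hF : IsClosed F) {K : Set Y} (hK : IsCompact K) :
    IsClosed (Prod.fst '' (F ∩ Set.univ ×ˢ K)) := by
  have := isCompact_iff_compactSpace.1 hK
  have : Prod.fst '' (F ∩ Set.univ ×ˢ K) = Prod.fst '' (Prod.map id ((↑) : K → Y) ⁻¹' F) := by
    ext x
    simp [and_comm]
  rw [this]
  exact isClosedMap_fst_of_compactSpace _ (hF.preimage (by fun_prop))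

theorem continuum_le_mk_image_fst {X Y : Type*} [TopologicalSpace X] [PolishSpace X]
    [TopologicalSpace Y] [SigmaCompactSpace Y] {F : Set (X × Y)} (hF : IsClosed F)
    (h : ¬(Prod.fst '' F).Countable) : 𝔠 ≤ #(Prod.fst '' F) := by
  have hcover : Prod.fst '' F = ⋃ k, Prod.fst '' (F ∩ Set.univ ×ˢ compactCovering Y k) := by
    rw [← image_iUnion, ← inter_iUnion, ← prod_iUnion, iUnion_compactCovering, univ_prod_univ,
      inter_univ]
  obtain ⟨k, hk⟩ : ∃ k, ¬(Prod.fst '' (F ∩ Set.univ ×ˢ compactCovering Y k)).Countable := by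
    by_contra! hall
    exact h (hcover ▸ countable_iUnion hall)
  have hclosed := hF.isClosed_image_fst_inter_prod (isCompact_compactCovering Y k)
  exact (hclosed.continuum_le_mk_of_not_countable hk).trans
    (mk_le_mk_of_subset (image_mono inter_subset_left))

section WeightedComp

variable {X Y 𝕜 : Type*}

def weightedComp [CommSemiring 𝕜] (φ : X → Y) (c : X → 𝕜) : (Y → 𝕜) →ₗ[𝕜] X → 𝕜 :=
  LinearMap.mulLeft 𝕜 c ∘ₗ LinearMap.funLeft 𝕜 𝕜 φ

@[simp]
theorem weightedComp_apply [CommSemiring 𝕜] (φ : X → Y) (c : X → 𝕜) (g : Y → 𝕜) (x : X) :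
    weightedComp φ c g x = c x * g (φ x) :=
  rfl

theorem weightedComp_injective [CommSemiring 𝕜] [IsLeftCancelMulZero 𝕜] {φ : X → Y}
    {c : X → 𝕜} (h : ∀ y, ∃ x, φ x = y ∧ c x ≠ 0) : Injective (weightedComp φ c) := by
  intro g g' hgg'
  funext y
  obtain ⟨x, rfl, hx⟩ := h y
  exact mul_left_cancel₀ hx (congrFun hgg' x)

theorem range_weightedComp [Field 𝕜] (φ : X → Y) (c : X → 𝕜) :
    (LinearMap.range (weightedComp φ c) : Set (X → 𝕜)) =
      {f | ∀ x, c x = 0 → f x = 0} ∩ {f | ∀ x x', φ x = φ x' → c x' * f x = c x * f x'} := by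
  ext f
  constructor
  · rintro ⟨g, rfl⟩
    refine ⟨fun x hx ↦ by simp [hx], fun x x' hxx' ↦ by simp [hxx']; ring⟩
  · rintro ⟨hf₀, hf⟩
    classical
    refine ⟨fun y ↦ if hy : ∃ x, φ x = y ∧ c x ≠ 0 then f hy.choose / c hy.choose else 0, ?_⟩
    funext x
    by_cases hx : c x = 0
    · simp [hx, hf₀ x hx]
    have hy : ∃ x', φ x' = φ x ∧ c x' ≠ 0 := ⟨x, rfl, hx⟩
    obtain ⟨hφ, hc⟩ := hy.choose_spec
    simp only [weightedComp_apply, dif_pos hy]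
    rw [mul_div_assoc', div_eq_iff hc, mul_comm (f x), hf x _ hφ.symm]

theorem isClosed_range_weightedComp [Field 𝕜] [TopologicalSpace 𝕜] [ContinuousMul 𝕜]
    [T2Space 𝕜] (φ : X → Y) (c : X → 𝕜) :
    IsClosed (LinearMap.range (weightedComp φ c) : Set (X → 𝕜)) := by
  rw [range_weightedComp]
  simp only [ofPred_forall]
  exact (isClosed_iInter fun x ↦ isClosed_iInter fun _ ↦
      isClosed_eq (continuous_apply x) continuous_const).inter
    (isClosed_iInter fun x ↦ isClosed_iInter fun x' ↦ isClosed_iInter fun _ ↦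
      isClosed_eq (continuous_const.mul (continuous_apply x))
        (continuous_const.mul (continuous_apply x')))

end WeightedComp

def IsJonesCoding {X : Type*} [TopologicalSpace X] (φ c : X → ℝ) : Prop :=
  ∀ a t : ℝ, t ≠ 0 → ∀ F : Set (X × ℝ), IsClosed F → ¬(Prod.fst '' F).Countable →
    ∃ x, φ x = a ∧ (x, c x * t) ∈ F

theorem exists_isJonesCoding (X : Type u) [TopologicalSpace X] [PolishSpace X] :
    ∃ φ c : X → ℝ, IsJonesCoding φ c := by
  let Target := {F : Set (X × ℝ) // IsClosed F ∧ ¬(Prod.fst '' F).Countable}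
  have hTarget : #Target ≤ 𝔠 :=
    (mk_subtype_mono fun _ hF ↦ hF.1).trans (mk_isClosed_le_continuum _)
  have hι : #(ℝ × ℝ × Target) ≤ 𝔠 :=
    calc #(ℝ × ℝ × Target) = 𝔠 * (𝔠 * #Target) := by simp [mk_prod, mk_real]
      _ ≤ 𝔠 * (𝔠 * 𝔠) := by gcongr
      _ = 𝔠 := by simp
  obtain ⟨x, hx, hxF⟩ := exists_injective_forall_mem (fun i : ℝ × ℝ × Target ↦ Prod.fst '' i.2.2.1)
    fun i ↦ hι.trans (continuum_le_mk_image_fst i.2.2.2.1 i.2.2.2.2)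
  have : ∀ i, ∃ y, (x i, y) ∈ i.2.2.1 := fun i ↦ by
    obtain ⟨⟨_, y⟩, hy, rfl⟩ := hxF i
    exact ⟨y, hy⟩
  choose y hy using this
  refine ⟨extend x (fun i ↦ i.1) 0, extend x (fun i ↦ y i / i.2.1) 0,
    fun a t ht F hF hunc ↦ ⟨x (a, t, ⟨F, hF, hunc⟩), hx.extend_apply .., ?_⟩⟩
  rw [hx.extend_apply, div_mul_cancel₀ _ ht]
  exact hy (a, t, ⟨F, hF, hunc⟩)

theorem IsJonesCoding.exists_ne_zero {X : Type*} [TopologicalSpace X] [Uncountable X]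
    {φ c : X → ℝ} (h : IsJonesCoding φ c) (a : ℝ) : ∃ x, φ x = a ∧ c x ≠ 0 := by
  obtain ⟨x, hxa, hx⟩ := h a 1 one_ne_zero (Set.univ ×ˢ {1}) (isClosed_univ.prod isClosed_singleton)
    (by rw [fst_image_prod _ (singleton_nonempty _), countable_univ_iff]; exact not_countable)
  exact ⟨x, hxa, by simp_all⟩

theorem IsJonesCoding.jonesFn {n : ℕ} {φ c : (Fin n → ℝ) → ℝ} (h : IsJonesCoding φ c)
    {g : ℝ → ℝ} (hg : g ≠ 0) : JonesFn (weightedComp φ c g) := by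
  intro F hF hunc
  obtain ⟨a, ha⟩ := Function.ne_iff.1 hg
  obtain ⟨x, rfl, hx⟩ := h a (g a) ha F hF hunc
  exact ⟨x, hx⟩

/-- For every `n ≥ 1`, the class `J(ℝⁿ)` of Jones functions is `2^𝔠`-spaceable with
respect to the topology of pointwise convergence. -/
theorem stmt15 (n : ℕ) (hn : 1 ≤ n) :
    ∃ V : Submodule ℝ ((Fin n → ℝ) → ℝ),
      IsClosed (V : Set ((Fin n → ℝ) → ℝ)) ∧
      Module.rank ℝ V = 2 ^ Cardinal.continuum ∧
      ∀ f ∈ V, f ≠ 0 → JonesFn f := by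
  have : Uncountable (Fin n → ℝ) :=
    (show Injective (fun r _ ↦ r : ℝ → Fin n → ℝ) from
      fun r s h ↦ congrFun h ⟨0, hn⟩).uncountable
  obtain ⟨φ, c, hφc⟩ := exists_isJonesCoding (Fin n → ℝ)
  refine ⟨LinearMap.range (weightedComp φ c), isClosed_range_weightedComp φ c, ?_, ?_⟩
  · rw [rank_range_of_injective _ (weightedComp_injective hφc.exists_ne_zero), rank_fun_infinite,
      mk_arrow, mk_real, lift_continuum, power_self_eq aleph0_le_continuum]
  · rintro _ ⟨g, rfl⟩ hg
    exact hφc.jonesFn (by rintro rfl; exact hg (map_zero _))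
end

section
/- For every n ≥ 1, if Z is a linear subspace of the real vector space of all functions from ℝⁿ to ℝ such that every nonzero element of Z is injective, then dim(Z) ≤ 1. In other words, the family of one-to-one functions from ℝⁿ to ℝ is 1-lineable but not 2-lineable. -/
open Function

/-- For `a ≠ b`, the map `f ↦ f a - f b` embeds `Z` linearly into the scalars: a nonzero `f` in its
kernel takes the same value at two distinct points, so it is not injective. -/
theorem Submodule.rank_le_one_of_forall_injective {X K : Type*} [Field K] [Nontrivial X]
    (Z : Submodule K (X → K)) (hZ : ∀ f ∈ Z, f ≠ 0 → Injective f) :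
    Module.rank K Z ≤ 1 := by
  obtain ⟨a, b, hab⟩ := exists_pair_ne X
  let evalSub : Z →ₗ[K] K :=
    (LinearMap.proj (R := K) (φ := fun _ : X => K) a - LinearMap.proj b) ∘ₗ Z.subtype
  have hinj : Injective evalSub := by
    refine (injective_iff_map_eq_zero evalSub).mpr fun f hf => ?_
    by_contra hf0
    have hfab : (f : X → K) a = (f : X → K) b := sub_eq_zero.mp hf
    exact hab (hZ f f.2 (by simpa using hf0) hfab)
  simpa using evalSub.lift_rank_le_of_injective hinj

/-- The family of one-to-one functions from `ℝⁿ` to `ℝ` is `1`-lineable but not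
`2`-lineable: any linear subspace all of whose nonzero elements are injective has
dimension at most `1`. -/
theorem stmt16 (n : ℕ) (hn : 1 ≤ n)
    (Z : Submodule ℝ ((Fin n → ℝ) → ℝ))
    (hZ : ∀ f ∈ Z, f ≠ 0 → Function.Injective f) :
    Module.rank ℝ Z ≤ 1 :=
  have : Nonempty (Fin n) := ⟨⟨0, hn⟩⟩
  Z.rank_le_one_of_forall_injective hZ
end

section
/- For every n ≥ 2, no function f : ℝⁿ → ℝ is both perfectly everywhere surjective and Darboux; that is, PES(ℝⁿ) ∩ D(ℝⁿ) = ∅. -/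
/-!
Let `f` be perfectly everywhere surjective. Then `s = f⁻¹' (ℝ \ (0, 1))` meets every nonempty
perfect set. In `ℝⁿ`, `n ≥ 2`, such a set is connected: if `u, v` were open sets separating it,
the closed set `(u ∪ v)ᶜ` would contain no perfect set, hence be countable by Cantor–Bendixson;
its complement `u ∪ v` would then be connected, so `u ∩ v` would be a nonempty open set, which
contains a perfect set and therefore a point of `s`. But `f '' s = ℝ \ (0, 1)` is disconnected,
so `f` is not Darboux.
-/

/-- `f : ℝⁿ → ℝ` is perfectly everywhere surjective if `f '' P = ℝ` for every
perfect (nonempty, closed, without isolated points) set `P ⊆ ℝⁿ`. -/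
def PerfectlyEverywhereSurjective {n : ℕ} (f : (Fin n → ℝ) → ℝ) : Prop :=
  ∀ P : Set (Fin n → ℝ), Perfect P → P.Nonempty → f '' P = Set.univ

/-- `f : ℝⁿ → ℝ` is Darboux if it maps connected sets onto connected sets. -/
def DarbouxFn {n : ℕ} (f : (Fin n → ℝ) → ℝ) : Prop :=
  ∀ K : Set (Fin n → ℝ), IsPreconnected K → IsPreconnected (f '' K)

open Set

theorem IsOpen.exists_perfect_nonempty_subset {X : Type*} [TopologicalSpace X] [RegularSpace X]
    [PerfectSpace X] {U : Set X} (hU : IsOpen U) (hne : U.Nonempty) :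
    ∃ P : Set X, Perfect P ∧ P.Nonempty ∧ P ⊆ U := by
  obtain ⟨x, hx⟩ := hne
  obtain ⟨V, ⟨hxV, hV⟩, hVU⟩ := (hasBasis_opens_closure x).mem_iff.1 (hU.mem_nhds hx)
  exact ⟨closure V, hV.perfect_closure, ⟨x, subset_closure hxV⟩, hVU⟩

theorem isPreconnected_of_forall_perfect_inter_nonempty {E : Type*} [NormedAddCommGroup E]
    [NormedSpace ℝ E] [SecondCountableTopology E] (hE : 1 < Module.rank ℝ E) {s : Set E}
    (hs : ∀ P : Set E, Perfect P → P.Nonempty → (s ∩ P).Nonempty) : IsPreconnected s := by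
  have : Nontrivial E := rank_pos_iff_nontrivial.1 (zero_lt_one.trans hE)
  have : PerfectSpace E := perfectSpace_of_module ℝ E
  intro u v hu hv hsuv hsu hsv
  have hgap_countable : (u ∪ v)ᶜ.Countable := by
    by_contra hunc
    obtain ⟨P, hP, hPne, hPgap⟩ :=
      exists_perfect_nonempty_of_isClosed_of_not_countable (hu.union hv).isClosed_compl hunc
    obtain ⟨x, hxs, hxP⟩ := hs P hP hPne
    exact hPgap hxP (hsuv hxs)
  have huv_conn : IsPreconnected (u ∪ v) := by
    simpa only [compl_compl] using
      (hgap_countable.isConnected_compl_of_one_lt_rank hE).isPreconnected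
  obtain ⟨x, -, hxuv⟩ := huv_conn u v hu hv subset_rfl
    (hsu.imp fun x hx => ⟨Or.inl hx.2, hx.2⟩) (hsv.imp fun x hx => ⟨Or.inr hx.2, hx.2⟩)
  obtain ⟨P, hP, hPne, hPuv⟩ := (hu.inter hv).exists_perfect_nonempty_subset ⟨x, hxuv⟩
  obtain ⟨y, hys, hyP⟩ := hs P hP hPne
  exact ⟨y, hys, hPuv hyP⟩

theorem not_isPreconnected_compl_Ioo {a b : ℝ} (hab : a < b) : ¬IsPreconnected (Ioo a b)ᶜ := by
  intro h
  obtain ⟨c, hc⟩ := exists_between hab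
  exact h.Icc_subset (a := a) (b := b) (by simp) (by simp) (Ioo_subset_Icc_self hc) hc

theorem PerfectlyEverywhereSurjective.preimage_inter_nonempty {n : ℕ} {f : (Fin n → ℝ) → ℝ}
    (hf : PerfectlyEverywhereSurjective f) {t : Set ℝ} (ht : t.Nonempty) {P : Set (Fin n → ℝ)}
    (hP : Perfect P) (hPne : P.Nonempty) : (f ⁻¹' t ∩ P).Nonempty := by
  obtain ⟨y, hy⟩ := ht
  obtain ⟨x, hxP, rfl⟩ : y ∈ f '' P := hf P hP hPne ▸ mem_univ y
  exact ⟨x, hy, hxP⟩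

/-- For `n ≥ 2`, no function `f : ℝⁿ → ℝ` is both perfectly everywhere surjective
and Darboux. -/
theorem stmt17 (n : ℕ) (hn : 2 ≤ n) (f : (Fin n → ℝ) → ℝ) :
    ¬ (PerfectlyEverywhereSurjective f ∧ DarbouxFn f) := by
  rintro ⟨hPES, hD⟩
  have hrank : 1 < Module.rank ℝ (Fin n → ℝ) := by
    rw [rank_fin_fun]
    exact_mod_cast hn
  have : Nontrivial (Fin n → ℝ) := rank_pos_iff_nontrivial.1 (zero_lt_one.trans hrank)
  have hsurj : Function.Surjective f := range_eq_univ.1 <| image_univ ▸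
    hPES univ (perfectSpace_of_module ℝ _).univ_perfect univ_nonempty
  have hgap : IsPreconnected (f '' (f ⁻¹' (Ioo 0 1)ᶜ)) :=
    hD _ <| isPreconnected_of_forall_perfect_inter_nonempty hrank fun P hP hPne =>
      hPES.preimage_inter_nonempty ⟨0, by simp⟩ hP hPne
  rw [image_preimage_eq _ hsurj] at hgap
  exact not_isPreconnected_compl_Ioo zero_lt_one hgap
end

section
/- For every n ≥ 2, every Jones function f : ℝⁿ → ℝ is almost continuous but not Darboux; that is, J(ℝⁿ) ⊆ AC(ℝⁿ) \ D(ℝⁿ). -/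
/-!
If an open set `U` contains the graph of a Jones function, the closed set `K = Uᶜ` has countable
projection, since otherwise the graph would meet it. A continuous function whose graph avoids such
a `K` is obtained by patching. Over a compact piece `T`, pass from the current function `h` to a
constant `y` whose graph misses `K` near `T` through a cutoff in the distance to `T`; the
transition band `a ≤ dist(·, T) ≤ b` is chosen so that `K` has no point of height at most
`max ‖h‖ |y|` above it, which is possible because the distances to `T` of such points form a
countable compact subset of `ℝ`. Patching annulus after annulus, the modifications are locally
finite and the limit is continuous.

A Jones function takes every value on every uncountable closed set. Hence `f⁻¹' {0, 1}` meets every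
uncountable closed set, so it is connected because complements of countable sets in `ℝⁿ`, `n ≥ 2`,
are connected; but its image `{0, 1}` is not.
-/

open Cardinal

/-- `f : ℝⁿ → ℝ` is almost continuous (in the sense of Stallings) if every open set
`U ⊆ ℝⁿ × ℝ` containing the graph of `f` contains the graph of a continuous function. -/
def AlmostContinuous {n : ℕ} (f : (Fin n → ℝ) → ℝ) : Prop :=
  ∀ U : Set ((Fin n → ℝ) × ℝ), IsOpen U → (∀ x, (x, f x) ∈ U) →
    ∃ g : (Fin n → ℝ) → ℝ, Continuous g ∧ ∀ x, (x, g x) ∈ U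

open Set Metric Topology

theorem Real.exists_Icc_disjoint_of_countable {S : Set ℝ} (hS : IsClosed S)
    (hSc : S.Countable) {l u : ℝ} (hlu : l < u) :
    ∃ a b, l < a ∧ a < b ∧ b < u ∧ Disjoint (Icc a b) S := by
  obtain ⟨t, htlu, htS⟩ := (hSc.dense_compl ℝ).inter_open_nonempty _ isOpen_Ioo
    (nonempty_Ioo.2 hlu)
  obtain ⟨v, htv, hsub⟩ := exists_Ico_subset_of_mem_nhds
    ((isOpen_Ioo.inter hS.isOpen_compl).mem_nhds ⟨htlu, htS⟩) ⟨t + 1, lt_add_one t⟩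
  have hIcc : Icc t ((t + v) / 2) ⊆ Ioo l u ∩ Sᶜ :=
    (Icc_subset_Ico_right (by linarith)).trans hsub
  exact ⟨t, (t + v) / 2, htlu.1, by linarith, (hIcc ⟨by linarith, le_rfl⟩).1.2,
    disjoint_left.2 fun z hz => (hIcc hz).2⟩

theorem exists_band_forall_lt_abs {X : Type*} [TopologicalSpace X] {K : Set (X × ℝ)}
    (hK : IsClosed K) (hKc : (Prod.fst '' K).Countable) {d : X → ℝ} (hd : Continuous d)
    {L : Set X} (hL : IsCompact L) {R : ℝ} (hR : 0 < R) (hdL : ∀ z, d z < R → z ∈ L) (W : ℝ) :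
    ∃ a b, 0 < a ∧ a < b ∧ b < R ∧
      ∀ z y, (z, y) ∈ K → a ≤ d z → d z ≤ b → W < |y| := by
  set S := d '' (Prod.fst '' (K ∩ L ×ˢ Icc (-W) W))
  have hS : IsCompact S :=
    (((hL.prod isCompact_Icc).inter_left hK).image continuous_fst).image hd
  obtain ⟨a, b, ha, hab, hbR, hdisj⟩ := Real.exists_Icc_disjoint_of_countable
    hS.isClosed ((hKc.mono (image_mono inter_subset_left)).image d) hR
  refine ⟨a, b, ha, hab, hbR, fun z y hzy haz hzb => ?_⟩
  by_contra! hy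
  have hzL : z ∈ L := hdL z (hzb.trans_lt hbR)
  exact hdisj.notMem_of_mem_left ⟨haz, hzb⟩ ⟨z, ⟨(z, y), ⟨hzy, hzL, abs_le.1 hy⟩, rfl⟩, rfl⟩

theorem exists_continuous_forall_eventually_eq {X Y : Type*} [TopologicalSpace X]
    [TopologicalSpace Y] (G : ℕ → X → Y) (hG : ∀ m, Continuous (G m))
    (hstab : ∀ x, ∃ s ∈ 𝓝 x, ∃ N, ∀ m ≥ N, EqOn (G m) (G N) s) :
    ∃ g : X → Y, Continuous g ∧ ∀ x, ∃ N, ∀ m ≥ N, G m x = g x := by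
  choose s hs N hN using hstab
  refine ⟨fun x => G (N x) x, continuous_iff_continuousAt.2 fun x => ?_, fun x =>
    ⟨N x, fun m hm => hN x m hm (mem_of_mem_nhds (hs x))⟩⟩
  refine ((hG (N x)).continuousAt).congr (Filter.eventually_of_mem (hs x) fun z hz => ?_)
  calc G (N x) z = G (max (N x) (N z)) z := (hN x _ (le_max_left _ _) hz).symm
    _ = G (N z) z := hN z _ (le_max_right _ _) (mem_of_mem_nhds (hs z))

section Patching

variable {X : Type*} {K : Set (X × ℝ)}

def IsSafePatch (K : Set (X × ℝ)) (U C : Set X) (h h' : X → ℝ) : Prop :=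
  EqOn h' h Uᶜ ∧ (∀ z ∈ C, (z, h' z) ∉ K) ∧ ∀ z, h' z = h z ∨ (z, h' z) ∉ K

namespace IsSafePatch

variable {U V C D : Set X} {h h₁ h₂ : X → ℝ}

theorem refl (K : Set (X × ℝ)) (U : Set X) (h : X → ℝ) : IsSafePatch K U ∅ h h :=
  ⟨fun _ _ => rfl, by simp, fun _ => Or.inl rfl⟩

theorem mono (hUV : U ⊆ V) (hDC : D ⊆ C) (hp : IsSafePatch K U C h h₁) :
    IsSafePatch K V D h h₁ :=
  ⟨hp.1.mono (compl_subset_compl.2 hUV), fun z hz => hp.2.1 z (hDC hz), hp.2.2⟩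

theorem trans (hp₁ : IsSafePatch K U C h h₁) (hp₂ : IsSafePatch K U D h₁ h₂) :
    IsSafePatch K U (C ∪ D) h h₂ := by
  refine ⟨fun z hz => (hp₂.1 hz).trans (hp₁.1 hz), fun z hz => ?_, fun z => ?_⟩
  · rcases hz with hz | hz
    · exact (hp₂.2.2 z).elim (fun h => h ▸ hp₁.2.1 z hz) id
    · exact hp₂.2.1 z hz
  · exact (hp₂.2.2 z).elim (fun h => h ▸ hp₁.2.2 z) Or.inr

end IsSafePatch

variable [PseudoMetricSpace X] [ProperSpace X]

theorem exists_isSafePatch (hK : IsClosed K) (hKc : (Prod.fst '' K).Countable)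
    (h : C(X, ℝ)) {T U : Set X} (hT : IsCompact T) (hU : IsOpen U) (hTU : T ⊆ U) {y : ℝ}
    (hy : ∀ z ∈ U, (z, y) ∉ K) : ∃ h' : C(X, ℝ), IsSafePatch K U T h h' := by
  rcases T.eq_empty_or_nonempty with rfl | hTne
  · exact ⟨h, .refl K U h⟩
  obtain ⟨R, hR, hRU⟩ := hT.exists_cthickening_subset_open hU hTU
  set d : X → ℝ := fun z => infDist z T
  have hd : Continuous d := continuous_infDist_pt T
  have hdR : ∀ z, d z < R → z ∈ cthickening R T := fun z hz =>
    thickening_subset_cthickening R T ((mem_thickening_iff_infDist_lt hTne).2 hz)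
  obtain ⟨W₀, hW₀⟩ := (hT.cthickening (r := R)).exists_bound_of_continuousOn
    h.continuous.continuousOn
  obtain ⟨a, b, ha, hab, hbR, hband⟩ := exists_band_forall_lt_abs hK hKc hd
    hT.cthickening hR hdR (max W₀ |y|)
  obtain ⟨φ, hφb, hφa, hφ01⟩ := exists_continuous_zero_one_of_isClosed
    (isClosed_le continuous_const hd) (isClosed_le hd continuous_const)
    (disjoint_left.2 fun z (hbz : b ≤ d z) (hza : d z ≤ a) => by linarith)
  set h' : C(X, ℝ) := h + φ * (ContinuousMap.const X y - h)
  have h'_apply : ∀ z, h' z = h z + φ z * (y - h z) := fun z => rfl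
  have h'_eq_h : ∀ z, b ≤ d z → h' z = h z := fun z hz => by
    rw [h'_apply, hφb hz]; simp
  have h'_safe : ∀ z, d z ≤ a → (z, h' z) ∉ K := fun z hz => by
    rw [h'_apply, hφa hz, Pi.one_apply, one_mul, add_sub_cancel]
    exact hy z (hRU (hdR z (by linarith)))
  refine ⟨h', fun z hz => h'_eq_h z ?_, fun z hz => h'_safe z ?_, fun z => ?_⟩
  · by_contra! hzb
    exact hz (hRU (hdR z (hzb.trans hbR)))
  · simp [d, infDist_zero_of_mem hz, ha.le]
  rcases le_or_gt (d z) a with hza | haz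
  · exact Or.inr (h'_safe z hza)
  rcases le_or_gt b (d z) with hbz | hzb
  · exact Or.inl (h'_eq_h z hbz)
  -- In the band, `h' z` lies between `h z` and `y`, so `|h' z| ≤ max W₀ |y|`.
  refine Or.inr fun hzK => (hband z _ hzK haz.le hzb.le).not_ge ?_
  have hhz : |h z| ≤ max W₀ |y| := le_max_of_le_left ((Real.norm_eq_abs _).symm.trans_le
    (hW₀ z (hdR z (hzb.trans hbR))))
  obtain ⟨hh₁, hh₂⟩ := abs_le.1 hhz
  obtain ⟨hy₁, hy₂⟩ := abs_le.1 (le_max_right W₀ |y|)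
  obtain ⟨hφ₀, hφ₁⟩ := hφ01 z
  rw [h'_apply, abs_le]
  constructor <;> nlinarith

theorem exists_isSafePatch_of_isCompact (hK : IsClosed K) (hKc : (Prod.fst '' K).Countable)
    (hKx : ∀ x, ∃ y, (x, y) ∉ K) (h : C(X, ℝ)) {C U : Set X} (hC : IsCompact C)
    (hU : IsOpen U) (hCU : C ⊆ U) : ∃ h' : C(X, ℝ), IsSafePatch K U C h h' := by
  revert h
  refine hC.induction_on (p := fun C => ∀ h : C(X, ℝ), ∃ h' : C(X, ℝ), IsSafePatch K U C h h')
    (fun h => ⟨h, .refl K U h⟩) (fun s t hst ht h => (ht h).imp fun _ => .mono le_rfl hst)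
    (fun s t hs ht h => ?_) fun x hx => ?_
  · obtain ⟨h₁, hp₁⟩ := hs h
    obtain ⟨h₂, hp₂⟩ := ht h₁
    exact ⟨h₂, hp₁.trans hp₂⟩
  · obtain ⟨y, hy⟩ := hKx x
    have hO : IsOpen ({z | (z, y) ∉ K} ∩ U) :=
      (hK.isOpen_compl.preimage (by fun_prop)).inter hU
    obtain ⟨T, hT, hxT, hTO⟩ := exists_compact_subset hO ⟨hy, hCU hx⟩
    refine ⟨T, mem_nhdsWithin_of_mem_nhds (mem_interior_iff_mem_nhds.1 hxT), fun h => ?_⟩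
    obtain ⟨h', hp⟩ := exists_isSafePatch hK hKc h hT hO hTO fun z hz => hz.1
    exact ⟨h', hp.mono inter_subset_right le_rfl⟩

theorem exists_continuous_forall_notMem [Nonempty X] (hK : IsClosed K)
    (hKc : (Prod.fst '' K).Countable) (hKx : ∀ x, ∃ y, (x, y) ∉ K) :
    ∃ g : X → ℝ, Continuous g ∧ ∀ x, (x, g x) ∉ K := by
  obtain ⟨x₀⟩ := ‹Nonempty X›
  have hstage : ∀ (m : ℕ) (h : C(X, ℝ)), ∃ h' : C(X, ℝ), IsSafePatch K
      (ball x₀ (m + 2) \ closedBall x₀ (m - 1)) (closedBall x₀ (m + 1) \ ball x₀ m) h h' :=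
    fun m h => exists_isSafePatch_of_isCompact hK hKc hKx h
      ((isCompact_closedBall x₀ (m + 1)).diff isOpen_ball)
      (isOpen_ball.sdiff isClosed_closedBall) fun z ⟨hz₁, hz₂⟩ => by
        simp only [mem_closedBall, mem_ball, not_lt] at hz₁ hz₂
        simp only [mem_sdiff, mem_ball, mem_closedBall, not_le]
        constructor <;> linarith
  choose next hnext using hstage
  set G : ℕ → C(X, ℝ) := fun m => Nat.rec 0 next m
  have hG : ∀ m, G (m + 1) = next m (G m) := fun m => rfl
  obtain ⟨g, hg, hGg⟩ := exists_continuous_forall_eventually_eq (fun m => G m)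
    (fun m => (G m).continuous) fun x => by
      obtain ⟨N, hN⟩ := exists_nat_gt (dist x x₀ + 1)
      refine ⟨ball x₀ (N - 1), isOpen_ball.mem_nhds (by rw [mem_ball]; linarith), N,
        fun m hm => ?_⟩
      induction m, hm using Nat.le_induction with
      | base => exact fun _ _ => rfl
      | succ m hNm ih =>
        intro z hz
        have hz' : z ∈ closedBall x₀ (m - 1) :=
          ball_subset_closedBall (ball_subset_ball (by simp [hNm]) hz)
        rw [hG, (hnext m (G m)).1 fun hzU => hzU.2 hz', ih hz]
  refine ⟨g, hg, fun x => ?_⟩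
  set m := ⌊dist x x₀⌋₊
  have hxm : x ∈ closedBall x₀ (m + 1) \ ball x₀ m :=
    ⟨mem_closedBall.2 (Nat.lt_floor_add_one _).le, not_lt.2 (Nat.floor_le dist_nonneg)⟩
  have hsafe : ∀ j ≥ m + 1, (x, G j x) ∉ K := fun j hj => by
    induction j, hj using Nat.le_induction with
    | base => exact (hnext m (G m)).2.1 x hxm
    | succ j _ ih => exact ((hnext j (G j)).2.2 x).elim (fun h => by rw [hG, h]; exact ih) id
  obtain ⟨N, hN⟩ := hGg x
  rw [← hN (max N (m + 1)) (le_max_left _ _)]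
  exact hsafe _ (le_max_right _ _)

end Patching

theorem not_countable_of_nonempty_interior {E : Type*} [AddCommGroup E] [Module ℝ E]
    [Nontrivial E] [TopologicalSpace E] [ContinuousAdd E] [ContinuousSMul ℝ E] {s : Set E}
    (hs : (interior s).Nonempty) : ¬ s.Countable := fun hc =>
  hs.ne_empty (interior_eq_empty_iff_dense_compl.2 (hc.dense_compl ℝ))

theorem isPreconnected_of_forall_inter_nonempty {E : Type*} [NormedAddCommGroup E]
    [NormedSpace ℝ E] (hE : 1 < Module.rank ℝ E) {A : Set E}
    (hA : ∀ C, IsClosed C → ¬ C.Countable → (A ∩ C).Nonempty) : IsPreconnected A := by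
  have : Nontrivial E := rank_pos_iff_nontrivial.1 (zero_lt_one.trans hE)
  intro u v hu hv hAuv ⟨p, hpA, hpu⟩ ⟨q, hqA, hqv⟩
  by_cases huv : (u ∪ v)ᶜ.Countable
  · have hconn : IsPreconnected (u ∪ v) := by
      simpa only [compl_compl] using
        (huv.isPathConnected_compl_of_one_lt_rank hE).isConnected.isPreconnected
    obtain ⟨z, -, hzu, hzv⟩ := hconn u v hu hv subset_rfl ⟨p, hAuv hpA, hpu⟩
      ⟨q, hAuv hqA, hqv⟩
    obtain ⟨ε, hε, hball⟩ := Metric.isOpen_iff.1 (hu.inter hv) z ⟨hzu, hzv⟩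
    obtain ⟨x, hxA, hx⟩ := hA (closedBall z (ε / 2)) isClosed_closedBall
      (not_countable_of_nonempty_interior
        ⟨z, ball_subset_interior_closedBall (mem_ball_self (half_pos hε))⟩)
    exact ⟨x, hxA, hball (closedBall_subset_ball (half_lt_self hε) hx)⟩
  · obtain ⟨x, hxA, hx⟩ := hA _ (hu.union hv).isClosed_compl huv
    exact absurd (hAuv hxA) hx

namespace JonesFn

variable {n : ℕ} {f : (Fin n → ℝ) → ℝ}

theorem exists_mem_eq (hf : JonesFn f) {C : Set (Fin n → ℝ)} (hC : IsClosed C)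
    (hCc : ¬ C.Countable) (c : ℝ) : ∃ x ∈ C, f x = c := by
  obtain ⟨x, hxC, hx⟩ := hf (C ×ˢ {c}) (hC.prod isClosed_singleton)
    (by rwa [fst_image_prod _ (singleton_nonempty c)])
  exact ⟨x, hxC, hx⟩

theorem almostContinuous (hf : JonesFn f) : AlmostContinuous f := by
  intro U hU hfU
  have hproj : (Prod.fst '' Uᶜ).Countable := by
    by_contra hunc
    obtain ⟨x, hx⟩ := hf Uᶜ hU.isClosed_compl hunc
    exact hx (hfU x)
  obtain ⟨g, hg, hgU⟩ := exists_continuous_forall_notMem hU.isClosed_compl hproj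
    fun x => ⟨f x, not_not.2 (hfU x)⟩
  exact ⟨g, hg, fun x => not_not.1 (hgU x)⟩

theorem not_darbouxFn (hn : 2 ≤ n) (hf : JonesFn f) : ¬ DarbouxFn f := by
  intro hD
  have hrank : 1 < Module.rank ℝ (Fin n → ℝ) := by
    rw [rank_fin_fun]; exact_mod_cast hn
  have : Nontrivial (Fin n → ℝ) := rank_pos_iff_nontrivial.1 (zero_lt_one.trans hrank)
  have hA : IsPreconnected (f ⁻¹' {0, 1}) :=
    isPreconnected_of_forall_inter_nonempty hrank fun C hC hCc =>
      let ⟨x, hxC, hx⟩ := hf.exists_mem_eq hC hCc 0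
      ⟨x, by simp [hx], hxC⟩
  have hmem : ∀ c ∈ ({0, 1} : Set ℝ), c ∈ f '' (f ⁻¹' {0, 1}) := fun c hc =>
    let ⟨x, _, hx⟩ := hf.exists_mem_eq isClosed_univ
      (not_countable_of_nonempty_interior (by simp)) c
    ⟨x, by rwa [mem_preimage, hx], hx⟩
  obtain ⟨x, hx, hx_half⟩ := (hD _ hA).Icc_subset (hmem 0 (by simp)) (hmem 1 (by simp))
    (show (1 / 2 : ℝ) ∈ Icc 0 1 by norm_num)
  rcases (hx : f x = 0 ∨ f x = 1) with h | h <;> rw [h] at hx_half <;> norm_num at hx_half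

end JonesFn

/-- For `n ≥ 2`, every Jones function on `ℝⁿ` is almost continuous but not Darboux. -/
theorem stmt18 (n : ℕ) (hn : 2 ≤ n) (f : (Fin n → ℝ) → ℝ) (hf : JonesFn f) :
    AlmostContinuous f ∧ ¬ DarbouxFn f :=
  ⟨hf.almostContinuous, hf.not_darbouxFn hn⟩
end

section
/- For every n ≥ 2, there exists a linear subspace V of the real vector space of all functions from ℝⁿ to ℝ such that V is closed in the topology of pointwise convergence, dim(V) = 2^𝔠, and every nonzero element of V is Darboux but not almost continuous. In other words, the class D(ℝⁿ) \ AC(ℝⁿ) is 2^𝔠-spaceable with respect to the topology of pointwise convergence. -/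
open Cardinal

open Set

/-!
The cosets of `ℚ` are dense and there are `𝔠` of them, so there are maps `Ψ : ℝ → Option ℝ × ℝ`
and `t : ℝ → ℝ` all of whose fibres are dense, with `t` fixed-point free. Put
`f_φ x = w x * φ (ℓ x)`, where `(w x, ℓ x)` is `(λ, σ)` if `Ψ x₀ = (some λ, σ)` and `(t x₁, σ)` if
`Ψ x₀ = (none, σ)`. Then `φ ↦ f_φ` is injective and linear, with range cut out by the pointwise
closed equations `f x = w x * f (P (ℓ x))`, `P σ` being any point where `w = 1` and `ℓ = σ`.

Let `φ σ ≠ 0`. Every interval of values of `x₀` contains hyperplanes on which `f_φ` is any given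
constant, so a connected set meeting two hyperplanes `x₀ = const` is mapped onto `ℝ`; within one
hyperplane `f_φ` is constant or `φ σ * t x₁`. Where `Ψ x₀ = (none, σ)`, `f_φ / φ σ = t x₁` misses
the diagonal `y = x₁` while lying above it at some `a` and below it at some `b`. The diagonal with
the half-lines below `(a, a)` and above `(b, b)` is closed and avoids the graph, yet by the
intermediate value theorem it meets the graph of every continuous function.
-/

theorem exists_dense_preimage_singleton {Y : Type} [Nonempty Y] (hY : #Y ≤ 𝔠) :
    ∃ Ψ : ℝ → Y, ∀ y, Dense (Ψ ⁻¹' {y}) := by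
  let H : AddSubgroup ℝ := (Rat.castHom ℝ).toAddMonoidHom.range
  have hcosets : 𝔠 ≤ #(ℝ ⧸ H) := by
    by_contra! hlt
    have hH : #H < 𝔠 := (mk_range_le.trans_eq mkRat).trans_lt aleph0_lt_continuum
    have hℝ : #ℝ = #(ℝ ⧸ H) * #H := by
      rw [mk_congr AddSubgroup.addGroupEquivQuotientProdAddSubgroup, mk_prod, lift_id, lift_id]
    exact (mul_lt_of_lt aleph0_lt_continuum.le hlt hH).ne (hℝ.symm.trans mk_real)
  obtain ⟨e⟩ := (le_def _ _).mp (hY.trans hcosets)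
  refine ⟨Function.invFun e ∘ QuotientAddGroup.mk, fun y => ?_⟩
  obtain ⟨c, hc⟩ := Function.invFun_surjective e.injective y
  obtain ⟨x, rfl⟩ := QuotientAddGroup.mk_surjective c
  refine dense_of_exists_between fun a b hab => ?_
  obtain ⟨q, hq⟩ := exists_rat_btwn (sub_lt_sub_right hab x)
  refine ⟨x + q, ?_, by constructor <;> linarith [hq.1, hq.2]⟩
  simp only [mem_preimage, Function.comp_apply, mem_singleton_iff, ← hc]
  congr 1
  exact QuotientAddGroup.eq.mpr ⟨-q, by simp⟩

theorem exists_dense_preimage_singleton_forall_ne_self :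
    ∃ t : ℝ → ℝ, (∀ y, Dense (t ⁻¹' {y})) ∧ ∀ τ, t τ ≠ τ := by
  obtain ⟨Ψ, hΨ⟩ := exists_dense_preimage_singleton (Y := ℝ) mk_real.le
  refine ⟨fun τ => if Ψ τ = τ then τ + 1 else Ψ τ,
    fun y => ((hΨ y).sdiff_singleton y).mono ?_, fun τ => ?_⟩
  · rintro τ ⟨hτ, hne : τ ≠ y⟩
    simp only [mem_preimage, mem_singleton_iff] at hτ ⊢
    rw [if_neg (hτ ▸ hne.symm), hτ]
  · dsimp only
    split_ifs with h
    · linarith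
    · exact h

universe u

section WeightedPullback

variable {X Y : Type u}

def weightedPullback (w : X → ℝ) (ℓ : X → Y) : (Y → ℝ) →ₗ[ℝ] X → ℝ where
  toFun φ x := w x * φ (ℓ x)
  map_add' _ _ := funext fun _ => mul_add _ _ _
  map_smul' _ _ := funext fun _ => mul_left_comm _ _ _

@[simp]
theorem weightedPullback_apply (w : X → ℝ) (ℓ : X → Y) (φ : Y → ℝ) (x : X) :
    weightedPullback w ℓ φ x = w x * φ (ℓ x) := rfl

variable {w : X → ℝ} {ℓ : X → Y}

theorem weightedPullback_injective (hP : ∀ y, ∃ x, w x = 1 ∧ ℓ x = y) :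
    Function.Injective (weightedPullback w ℓ) := fun φ ψ h => funext fun y => by
  obtain ⟨x, hw, rfl⟩ := hP y
  simpa [hw] using congrFun h x

theorem isClosed_range_weightedPullback (hP : ∀ y, ∃ x, w x = 1 ∧ ℓ x = y) :
    IsClosed (LinearMap.range (weightedPullback w ℓ) : Set (X → ℝ)) := by
  choose P hPw hPℓ using hP
  have hrange : (LinearMap.range (weightedPullback w ℓ) : Set (X → ℝ)) =
      ⋂ x, {f | f x = w x * f (P (ℓ x))} := by
    ext f
    simp only [SetLike.mem_coe, LinearMap.mem_range, mem_iInter, mem_ofPred_eq]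
    constructor
    · rintro ⟨φ, rfl⟩ x
      simp [hPw, hPℓ]
    · exact fun hf => ⟨f ∘ P, funext fun x => (hf x).symm⟩
  rw [hrange]
  exact isClosed_iInter fun x =>
    isClosed_eq (continuous_apply x) (continuous_const.mul (continuous_apply _))

theorem rank_range_weightedPullback (hP : ∀ y, ∃ x, w x = 1 ∧ ℓ x = y) :
    Module.rank ℝ (LinearMap.range (weightedPullback w ℓ)) = Module.rank ℝ (Y → ℝ) :=
  (LinearEquiv.ofInjective _ (weightedPullback_injective hP)).rank_eq.symm

end WeightedPullback

theorem rank_real_fun_real_eq_two_power_continuum : Module.rank ℝ (ℝ → ℝ) = 2 ^ 𝔠 := by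
  rw [rank_fun_infinite, mk_arrow, mk_real, lift_id, power_self_eq aleph0_le_continuum]

theorem AlmostContinuous.const_smul {n : ℕ} {f : (Fin n → ℝ) → ℝ} (hf : AlmostContinuous f)
    (c : ℝ) : AlmostContinuous (c • f) := by
  intro U hU hfU
  obtain ⟨g, hg, hgU⟩ := hf ((fun p => (p.1, c * p.2)) ⁻¹' U)
    (hU.preimage (continuous_fst.prodMk (continuous_const.mul continuous_snd))) hfU
  exact ⟨c • g, hg.const_smul c, hgU⟩

theorem not_almostContinuous_of_slice {n : ℕ} {f : (Fin n → ℝ) → ℝ} {i j : Fin n} (hij : i ≠ j)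
    {s : ℝ} {u : ℝ → ℝ} (hf : ∀ x, x i = s → f x = u (x j)) (hu : ∀ τ, u τ ≠ τ) {a b : ℝ}
    (ha : a < u a) (hb : u b < b) : ¬ AlmostContinuous f := by
  intro hAC
  let B : Set ((Fin n → ℝ) × ℝ) := {p | p.1 i = s ∧
    (p.2 = p.1 j ∨ (p.1 j = a ∧ p.2 ≤ a) ∨ (p.1 j = b ∧ b ≤ p.2))}
  have hB : IsClosed B := by
    have hi : Continuous fun p : (Fin n → ℝ) × ℝ => p.1 i :=
      (continuous_apply i).comp continuous_fst
    have hj : Continuous fun p : (Fin n → ℝ) × ℝ => p.1 j :=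
      (continuous_apply j).comp continuous_fst
    exact (isClosed_eq hi continuous_const).inter ((isClosed_eq continuous_snd hj).union
      (((isClosed_eq hj continuous_const).inter (isClosed_le continuous_snd continuous_const)).union
        ((isClosed_eq hj continuous_const).inter (isClosed_le continuous_const continuous_snd))))
  have hgraph : ∀ x, (x, f x) ∉ B := by
    rintro x ⟨hx, hxB⟩
    dsimp only at hxB
    rw [hf x hx] at hxB
    rcases hxB with h | ⟨h, h'⟩ | ⟨h, h'⟩
    · exact hu _ h
    · rw [h] at h'; linarith
    · rw [h] at h'; linarith
  obtain ⟨g, hg, hgB⟩ := hAC Bᶜ hB.isOpen_compl hgraph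
  let L : ℝ → Fin n → ℝ := fun τ => Function.update (fun _ => s) j τ
  have hLi (τ : ℝ) : L τ i = s := by simp [L, hij]
  have hLj (τ : ℝ) : L τ j = τ := by simp [L]
  have hL : Continuous L := continuous_const.update j continuous_id
  have hZa : a < g (L a) := by
    by_contra! h
    exact hgB (L a) ⟨hLi a, Or.inr (Or.inl ⟨hLj a, h⟩)⟩
  have hZb : g (L b) < b := by
    by_contra! h
    exact hgB (L b) ⟨hLi b, Or.inr (Or.inr ⟨hLj b, h⟩)⟩
  obtain ⟨τ, hτ⟩ : (0 : ℝ) ∈ range fun τ => g (L τ) - τ :=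
    intermediate_value_univ (f := fun τ => g (L τ) - τ) b a ((hg.comp hL).sub continuous_id)
      ⟨by linarith, by linarith⟩
  exact hgB (L τ) ⟨hLi τ, Or.inl ((sub_eq_zero.mp hτ).trans (hLj τ).symm)⟩

theorem IsPreconnected.image_of_dense_fibers {X : Type*} [TopologicalSpace X] {p f : X → ℝ}
    (hp : Continuous p) (hdense : ∀ y, Dense {s | ∀ x, p x = s → f x = y})
    (hfiber : ∀ K s, IsPreconnected K → K ⊆ p ⁻¹' {s} → IsPreconnected (f '' K))
    {K : Set X} (hK : IsPreconnected K) : IsPreconnected (f '' K) := by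
  rcases (p '' K).subsingleton_or_nontrivial with hsub | hnt
  · rcases K.eq_empty_or_nonempty with rfl | ⟨x₀, hx₀⟩
    · simpa using isPreconnected_empty
    · exact hfiber K (p x₀) hK fun x hx => hsub (mem_image_of_mem p hx) (mem_image_of_mem p hx₀)
  obtain ⟨a, ha, b, hb, hab⟩ : ∃ a ∈ p '' K, ∃ b ∈ p '' K, a < b := by
    obtain ⟨a, ha, b, hb, hne⟩ := hnt
    rcases hne.lt_or_gt with h | h
    exacts [⟨a, ha, b, hb, h⟩, ⟨b, hb, a, ha, h⟩]
  suffices f '' K = Set.univ from this ▸ isPreconnected_univ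
  refine eq_univ_of_forall fun y => ?_
  obtain ⟨s, hs, hsab⟩ := (hdense y).exists_between hab
  obtain ⟨x, hxK, rfl⟩ := (hK.image p hp.continuousOn).Icc_subset ha hb (Ioo_subset_Icc_self hsab)
  exact ⟨x, hxK, hs x rfl⟩

theorem IsPreconnected.image_of_dense_preimage {u : ℝ → ℝ} (hu : ∀ y, Dense (u ⁻¹' {y}))
    {I : Set ℝ} (hI : IsPreconnected I) : IsPreconnected (u '' I) :=
  hI.image_of_dense_fibers continuous_id
    (fun y => (hu y).mono fun _ hs _ hx => by subst hx; exact hs)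
    fun _ _ _ hK => ((subsingleton_singleton.anti hK).image u).isPreconnected

section Construction

variable {n : ℕ} (Ψ : ℝ → Option ℝ × ℝ) (t : ℝ → ℝ) (i j : Fin n)

def sliceWeight (x : Fin n → ℝ) : ℝ := (Ψ (x i)).1.getD (t (x j))

def sliceLabel (x : Fin n → ℝ) : ℝ := (Ψ (x i)).2

variable {Ψ t i j} {φ : ℝ → ℝ}

theorem darbouxFn_weightedPullback_slice (hΨ : ∀ y, Dense (Ψ ⁻¹' {y}))
    (ht : ∀ y, Dense (t ⁻¹' {y})) (hφ : φ ≠ 0) :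
    DarbouxFn (weightedPullback (sliceWeight Ψ t i j) (sliceLabel Ψ i) φ) := by
  obtain ⟨σ, hσ⟩ : ∃ σ, φ σ ≠ 0 := Function.ne_iff.mp hφ
  refine fun K hK => hK.image_of_dense_fibers (continuous_apply i) (fun y => ?_) ?_
  · refine (hΨ (some (y / φ σ), σ)).mono fun s hs x hx => ?_
    simp_all [sliceWeight, sliceLabel]
  intro K s hK hKs
  rcases hΨs : Ψ s with ⟨_ | c, σ'⟩
  · rw [image_congr (g := (fun τ => t τ * φ σ') ∘ (· j)) fun x hx => by
      simp [sliceWeight, sliceLabel, show x i = s from hKs hx, hΨs], image_comp]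
    by_cases hσ' : φ σ' = 0
    · simp only [hσ', mul_zero]
      exact (hK.image _ (continuous_apply j).continuousOn).image _ continuousOn_const
    · refine (hK.image _ (continuous_apply j).continuousOn).image_of_dense_preimage fun y => ?_
      refine (ht (y / φ σ')).mono fun τ (hτ : t τ = _) => ?_
      simp [hτ, hσ']
  · rw [image_congr (g := fun _ => c * φ σ') fun x hx => by
      simp [sliceWeight, sliceLabel, show x i = s from hKs hx, hΨs]]
    exact hK.image _ continuousOn_const

theorem not_almostContinuous_weightedPullback_slice (hij : i ≠ j) (hΨ : Function.Surjective Ψ)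
    (ht : ∀ y, Dense (t ⁻¹' {y})) (hfix : ∀ τ, t τ ≠ τ) (hφ : φ ≠ 0) :
    ¬ AlmostContinuous (weightedPullback (sliceWeight Ψ t i j) (sliceLabel Ψ i) φ) := by
  obtain ⟨σ, hσ⟩ : ∃ σ, φ σ ≠ 0 := Function.ne_iff.mp hφ
  obtain ⟨s, hs⟩ := hΨ (none, σ)
  obtain ⟨a, hta : t a = 0, ha⟩ := (ht 0).exists_between neg_one_lt_zero
  obtain ⟨b, htb : t b = 0, hb⟩ := (ht 0).exists_between zero_lt_one
  refine fun hAC => not_almostContinuous_of_slice hij (s := s) (fun x hx => ?_) hfix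
    (hta ▸ ha.2 : a < t a) (htb ▸ hb.1 : t b < b) (hAC.const_smul (φ σ)⁻¹)
  simp only [Pi.smul_apply, weightedPullback_apply, sliceWeight, sliceLabel, hx, hs, smul_eq_mul,
    Option.getD_none]
  field_simp

end Construction

/-- For `n ≥ 2`, the class `D(ℝⁿ) \ AC(ℝⁿ)` is `2^𝔠`-spaceable with respect to the
topology of pointwise convergence. -/
theorem stmt19 (n : ℕ) (hn : 2 ≤ n) :
    ∃ V : Submodule ℝ ((Fin n → ℝ) → ℝ),
      IsClosed (V : Set ((Fin n → ℝ) → ℝ)) ∧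
      Module.rank ℝ V = 2 ^ Cardinal.continuum ∧
      ∀ f ∈ V, f ≠ 0 → DarbouxFn f ∧ ¬ AlmostContinuous f := by
  obtain ⟨Ψ, hΨ⟩ := exists_dense_preimage_singleton (Y := Option ℝ × ℝ)
    (by simp [mk_real, add_one_eq aleph0_le_continuum])
  have hΨsurj : Function.Surjective Ψ := fun y => (hΨ y).nonempty
  obtain ⟨t, ht, hfix⟩ := exists_dense_preimage_singleton_forall_ne_self
  let i : Fin n := ⟨0, by omega⟩
  let j : Fin n := ⟨1, by omega⟩
  have hij : i ≠ j := by simp [i, j, Fin.ext_iff]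
  have hP : ∀ σ, ∃ x, sliceWeight Ψ t i j x = 1 ∧ sliceLabel Ψ i x = σ := fun σ =>
    let ⟨s, hs⟩ := hΨsurj (some 1, σ)
    ⟨fun _ => s, by simp [sliceWeight, sliceLabel, hs]⟩
  refine ⟨LinearMap.range (weightedPullback (sliceWeight Ψ t i j) (sliceLabel Ψ i)),
    isClosed_range_weightedPullback hP,
    (rank_range_weightedPullback hP).trans rank_real_fun_real_eq_two_power_continuum, ?_⟩
  rintro _ ⟨φ, rfl⟩ hf
  have hφ : φ ≠ 0 := by rintro rfl; exact hf (map_zero _)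
  exact ⟨darbouxFn_weightedPullback_slice hΨ ht hφ,
    not_almostContinuous_weightedPullback_slice hij hΨsurj ht hfix hφ⟩
end
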